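/- arXiv:math-ph/0412058 — 3 statements merged into one kernel-verified Lean document; each statement's English description precedes it below -/
import Mathlib

section
/- (Cylinder coherent states are close to plane coherent states.) There is a constant C > 0 such that for every integer N ≥ 1, every σ > 0 with σN ≥ 1, every 0 < δ < 1/2, every x = (q₀,p₀) ∈ ℝ² with q₀ ∈ (δ, 1−δ), and every q ∈ [0,1), | Ψ_{x,σ,C}(q) − Ψ_{x,σ}(q) | ≤ C (σN)^{1/4} e^{−πNσδ²}. -/
open scoped Real InnerProductSpace
open MeasureTheory

noncomputable section

/-- A smooth ℤ²-periodic function on ℝ², i.e. an observable in C^∞(T²). -/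
def PerSmooth (f : ℝ × ℝ → ℂ) : Prop :=
  ContDiff ℝ (⊤ : ℕ∞) f ∧ (∀ x : ℝ × ℝ, f (x.1 + 1, x.2) = f x) ∧
    (∀ x : ℝ × ℝ, f (x.1, x.2 + 1) = f x)

/-- Fourier coefficient  f̃(k) = ∫∫ f(q,p) e^{-2πi (q k₂ - p k₁)} dq dp. -/
def fourierCoef (f : ℝ × ℝ → ℂ) (k : ℤ × ℤ) : ℂ :=
  ∫ q in (0:ℝ)..1, ∫ p in (0:ℝ)..1,
    f (q, p) * Complex.exp (-2 * (Real.pi : ℂ) * Complex.I * ((q : ℂ) * k.2 - (p : ℂ) * k.1))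

/-- Translation operator T(k) on ℂ^N. -/
def Tmat (N : ℕ) (k : ℤ × ℤ) : Matrix (Fin N) (Fin N) ℂ :=
  Matrix.of fun j l =>
    if (l : ℤ) = ((j : ℤ) - k.1) % (N : ℤ) then
      Complex.exp (-(Real.pi : ℂ) * Complex.I * k.1 * k.2 / N) *
        Complex.exp (2 * (Real.pi : ℂ) * Complex.I * k.2 * (j : ℕ) / N)
    else 0

/-- Weyl quantisation  Op^W_N(f) = Σ_k f̃(k) T(k). -/
def OpW (N : ℕ) (f : ℝ × ℝ → ℂ) : Matrix (Fin N) (Fin N) ℂ :=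
  ∑' k : ℤ × ℤ, fourierCoef f k • Tmat N k

/-- Discrete Fourier transform matrix (F_N)_{kj} = N^{-1/2} e^{-2πi kj/N}. -/
def DFT (N : ℕ) : Matrix (Fin N) (Fin N) ℂ :=
  Matrix.of fun k j => ((Real.sqrt N : ℝ) : ℂ)⁻¹ *
    Complex.exp (-2 * (Real.pi : ℂ) * Complex.I * (k : ℕ) * (j : ℕ) / N)

/-- The block-diagonal matrix diag(F_{N/2}, F_{N/2}). -/
def Bmix (N : ℕ) : Matrix (Fin N) (Fin N) ℂ :=
  Matrix.of fun j l =>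
    if (j : ℕ) < N / 2 ∧ (l : ℕ) < N / 2 then
      ((Real.sqrt (N / 2 : ℕ) : ℝ) : ℂ)⁻¹ *
        Complex.exp (-2 * (Real.pi : ℂ) * Complex.I * (j : ℕ) * (l : ℕ) / (N / 2 : ℕ))
    else if N / 2 ≤ (j : ℕ) ∧ N / 2 ≤ (l : ℕ) then
      ((Real.sqrt (N / 2 : ℕ) : ℝ) : ℂ)⁻¹ *
        Complex.exp (-2 * (Real.pi : ℂ) * Complex.I * ((j : ℕ) - N / 2 : ℕ) *
          ((l : ℕ) - N / 2 : ℕ) / (N / 2 : ℕ))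
    else 0

/-- The quantised baker's map  B̂_N = F_N⁻¹ · diag(F_{N/2}, F_{N/2}). -/
def bakerQ (N : ℕ) : Matrix (Fin N) (Fin N) ℂ := (DFT N)⁻¹ * Bmix N

/-- Operator norm of an N×N complex matrix acting on ℓ²(Fin N). -/
def opNorm {N : ℕ} (M : Matrix (Fin N) (Fin N) ℂ) : ℝ :=
  ‖Matrix.toEuclideanCLM (𝕜 := ℂ) M‖

/-- Mixed partial derivative ∂_q^{γ₁} ∂_p^{γ₂} f. -/
def pderiv2 (γ : ℕ × ℕ) (f : ℝ × ℝ → ℂ) : ℝ × ℝ → ℂ :=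
  fun x => iteratedDeriv γ.1 (fun q => iteratedDeriv γ.2 (fun p => f (q, p)) x.2) x.1

/-- C^j norm: Σ_{|γ|≤j} sup |∂^γ f|. -/
def Cnorm (j : ℕ) (f : ℝ × ℝ → ℂ) : ℝ :=
  ∑ γ₁ ∈ Finset.range (j + 1), ∑ γ₂ ∈ Finset.range (j + 1 - γ₁),
    ⨆ x : ℝ × ℝ, ‖pderiv2 (γ₁, γ₂) f x‖

/-- Integral over the torus. -/
def torusInt (f : ℝ × ℝ → ℂ) : ℂ :=
  ∫ q in (0:ℝ)..1, ∫ p in (0:ℝ)..1, f (q, p)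

/-- The classical baker's map on [0,1)². -/
def bakerMap (x : ℝ × ℝ) : ℝ × ℝ :=
  if x.1 < 1 / 2 then (2 * x.1, x.2 / 2) else (2 * x.1 - 1, (x.2 + 1) / 2)

/-- The inverse baker's map on [0,1)². -/
def bakerInv (x : ℝ × ℝ) : ℝ × ℝ :=
  if x.2 < 1 / 2 then (x.1 / 2, 2 * x.2) else ((x.1 + 1) / 2, 2 * x.2 - 1)

/-- The ℤ²-periodic function a ∘ B^{-n} (n ≥ 0). -/
def evolveObs (a : ℝ × ℝ → ℂ) (n : ℕ) : ℝ × ℝ → ℂ :=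
  fun x => a (bakerInv^[n] (Int.fract x.1, Int.fract x.2))

/-- The ℤ²-periodic function a ∘ B^{-n} for n ∈ ℤ. -/
def evolveObsZ (a : ℝ × ℝ → ℂ) (n : ℤ) : ℝ × ℝ → ℂ :=
  fun x => a ((if 0 ≤ n then bakerInv^[n.natAbs] else bakerMap^[n.natAbs])
    (Int.fract x.1, Int.fract x.2))

/-- Membership in D_{n,δ,γ} (for the torus point x ∈ [0,1)²). -/
def inD (n : ℕ) (δ γ : ℝ) (x : ℝ × ℝ) : Prop :=
  (∀ k : ℤ, δ < |x.1 - (k : ℝ) / 2 ^ n|) ∧ x.2 ∈ Set.Ioo γ (1 - γ)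

/-- Membership in D_{1,δ,γ}. -/
def inD1 (δ γ : ℝ) (x : ℝ × ℝ) : Prop :=
  x.1 ∈ Set.Ioo δ (1 / 2 - δ) ∪ Set.Ioo (1 / 2 + δ) (1 - δ) ∧ x.2 ∈ Set.Ioo γ (1 - γ)

/-- Support of the periodic function a is contained in the set cut out by P on [0,1)². -/
def SuppIn (a : ℝ × ℝ → ℂ) (P : ℝ × ℝ → Prop) : Prop :=
  ∀ x : ℝ × ℝ, a x ≠ 0 → P (Int.fract x.1, Int.fract x.2)

/-- Plane coherent state Ψ_{x,σ}. -/
def planeCS (N : ℕ) (x : ℝ × ℝ) (σ : ℝ) (q : ℝ) : ℂ :=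
  (((2 * N * σ : ℝ) ^ ((1 : ℝ) / 4) : ℝ) : ℂ) *
    Complex.exp (-Complex.I * (Real.pi : ℂ) * N * (x.1 : ℂ) * (x.2 : ℂ) +
      2 * (Real.pi : ℂ) * Complex.I * N * (x.2 : ℂ) * (q : ℂ) -
      (σ : ℂ) * N * (Real.pi : ℂ) * ((q : ℂ) - (x.1 : ℂ)) ^ 2)

/-- Cylinder coherent state Ψ_{x,σ,C}(q) = Σ_ν Ψ_{x,σ}(q+ν). -/
def cylCS (N : ℕ) (x : ℝ × ℝ) (σ : ℝ) (q : ℝ) : ℂ :=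
  ∑' ν : ℤ, planeCS N x σ (q + ν)

/-- Torus coherent state ψ_{x,σ} ∈ ℂ^N. -/
def torusCS (N : ℕ) (x : ℝ × ℝ) (σ : ℝ) : EuclideanSpace ℂ (Fin N) :=
  (WithLp.equiv 2 (Fin N → ℂ)).symm fun j =>
    ((Real.sqrt N : ℝ) : ℂ)⁻¹ * cylCS N x σ ((j : ℕ) / N)

/-- Anti-Wick quantisation Op^{AW,σ}_N(f) = N ∫ f(x) |ψ_{x,σ}⟩⟨ψ_{x,σ}| dx. -/
def OpAW (N : ℕ) (σ : ℝ) (f : ℝ × ℝ → ℂ) : Matrix (Fin N) (Fin N) ℂ :=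
  Matrix.of fun j l => (N : ℂ) *
    ∫ q in (0:ℝ)..1, ∫ p in (0:ℝ)..1,
      f (q, p) * (torusCS N (q, p) σ : Fin N → ℂ) j *
        (starRingEnd ℂ) ((torusCS N (q, p) σ : Fin N → ℂ) l)

/-- A δ-cutoff: smooth ℤ-periodic, [0,1]-valued, 0 near ℤ, 1 away from ℤ. -/
def IsCutoff (δ : ℝ) (χ : ℝ → ℝ) : Prop :=
  ContDiff ℝ (⊤ : ℕ∞) χ ∧ (∀ x : ℝ, χ (x + 1) = χ x) ∧ (∀ x : ℝ, χ x ∈ Set.Icc (0:ℝ) 1) ∧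
    (∀ x : ℝ, (∃ m : ℤ, |x - (m : ℝ)| ≤ δ) → χ x = 0) ∧
    (∀ x : ℝ, (∃ m : ℤ, x - (m : ℝ) ∈ Set.Icc (2 * δ) (1 - 2 * δ)) → χ x = 1)

/-- The two-dimensional cutoff χ_{δ,n} for n ≥ 0. -/
def cutoffN (χ : ℝ → ℝ) (n : ℕ) (x : ℝ × ℝ) : ℝ := χ (2 ^ n * x.1) * χ x.2

/-- The two-dimensional cutoff χ_{δ,n} for n ∈ ℤ. -/
def cutoffZ (χ : ℝ → ℝ) (n : ℤ) (x : ℝ × ℝ) : ℝ :=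
  if 0 ≤ n then χ (2 ^ n.natAbs * x.1) * χ x.2 else χ (2 ^ n.natAbs * x.2) * χ x.1

/-- Gaussian kernel K_{N,σ}. -/
def Kker (N : ℕ) (σ : ℝ) (y : ℝ × ℝ) : ℝ :=
  2 * N * Real.exp (-2 * Real.pi * N * (σ * y.1 ^ 2 + y.2 ^ 2 / σ))

/-- Convolution of f with the Gaussian kernel over ℝ². -/
def fSharp (N : ℕ) (σ : ℝ) (f : ℝ × ℝ → ℂ) : ℝ × ℝ → ℂ :=
  fun x => ∫ y : ℝ × ℝ, f (x - y) * (Kker N σ y : ℂ)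

lemma norm_planeCS (N : ℕ) (x : ℝ × ℝ) (σ : ℝ) (q : ℝ) (h : 0 ≤ (2 * N * σ : ℝ) ^ ((1:ℝ)/4)) :
    ‖planeCS N x σ q‖ = (2 * N * σ : ℝ) ^ ((1:ℝ)/4) * Real.exp (-(σ * N * Real.pi * (q - x.1)^2)) := by
  unfold planeCS
  rw [norm_mul, Complex.norm_real, Real.norm_eq_abs, Complex.norm_exp,
    abs_of_nonneg h]
  congr 1
  simp [Complex.add_re, Complex.sub_re, Complex.mul_re, Complex.I_re, Complex.I_im, pow_two]

set_option maxHeartbeats 1000000 in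
/-- Cylinder coherent states are close to plane coherent states. -/
theorem cylinder_vs_plane :
    ∃ C : ℝ, 0 < C ∧ ∀ N : ℕ, 1 ≤ N → ∀ σ : ℝ, 0 < σ → 1 ≤ σ * N →
      ∀ δ : ℝ, 0 < δ → δ < 1 / 2 → ∀ x : ℝ × ℝ, δ < x.1 → x.1 < 1 - δ →
        ∀ q : ℝ, 0 ≤ q → q < 1 →
          ‖cylCS N x σ q - planeCS N x σ q‖
            ≤ C * (σ * N) ^ ((1 : ℝ) / 4) * Real.exp (-Real.pi * N * σ * δ ^ 2) := by
  refine ⟨20, by norm_num, fun N hN σ hσ hσN δ hδ hδ2 x hx1 hx2 q hq0 hq1 => ?_⟩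
  have hNpos : (0:ℝ) < N := by exact_mod_cast Nat.pos_of_ne_zero (by omega)
  have h2Nσ : (0:ℝ) < 2 * N * σ := by positivity
  have hπ : (1:ℝ) ≤ Real.pi := by linarith [Real.pi_gt_three]
  set A : ℝ := (2 * N * σ : ℝ) ^ ((1:ℝ)/4) with hA_def
  have hA0 : 0 ≤ A := Real.rpow_nonneg (le_of_lt h2Nσ) _
  set E : ℝ := Real.exp (-Real.pi * N * σ * δ ^ 2) with hE_def
  have hE0 : 0 < E := Real.exp_pos _
  have hE1 : E ≤ 1 := by
    have h0 : (0:ℝ) ≤ Real.pi * N * σ * δ ^ 2 := by positivity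
    exact Real.exp_le_one_iff.mpr (by linarith)
  set r : ℝ := Real.exp (-1) with hr_def
  have hr0 : 0 ≤ r := le_of_lt (Real.exp_pos _)
  have hr1 : r < 1 := Real.exp_lt_one_iff.mpr (by norm_num)
  have hrhalf : r ≤ 1/2 := by
    have h2e : (2:ℝ) ≤ Real.exp 1 := by nlinarith [Real.add_one_le_exp (1:ℝ)]
    rw [hr_def, Real.exp_neg]
    calc (Real.exp 1)⁻¹ ≤ ((2:ℝ))⁻¹ := inv_anti₀ (by norm_num) h2e
    _ = 1/2 := by norm_num
  set f : ℤ → ℂ := fun ν => planeCS N x σ (q + ν) with hf_def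
  have hnorm : ∀ ν : ℤ, ‖f ν‖ = A * Real.exp (-(σ * N * Real.pi * (q + ν - x.1)^2)) := by
    intro ν; exact norm_planeCS N x σ (q + ν) hA0
  have hnatAbs : ∀ ν : ℤ, (ν.natAbs : ℝ) = |(ν : ℝ)| := by
    intro ν; rw [Nat.cast_natAbs, Int.cast_abs]
  have hdist : ∀ ν : ℤ, ν ≠ 0 → (ν.natAbs : ℝ) - 1 + δ ≤ |q + ν - x.1| := by
    intro ν hν
    rcases lt_or_gt_of_ne hν with h | h
    · have hν1 : (ν:ℝ) ≤ -1 := by exact_mod_cast (by omega : ν ≤ -1)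
      rw [hnatAbs, abs_of_neg (by exact_mod_cast h), abs_sub_comm, le_abs]
      left; linarith
    · have hν1 : (1:ℝ) ≤ ν := by exact_mod_cast h
      rw [hnatAbs, abs_of_pos (by exact_mod_cast h), le_abs]
      left; linarith
  have hσNπ : (1:ℝ) ≤ σ * N * Real.pi :=
    hσN.trans (le_mul_of_one_le_right (by positivity) hπ)
  have hkey : ∀ ν : ℤ, ν ≠ 0 → ‖f ν‖ ≤ A * E * Real.exp 1 * r ^ ν.natAbs := by
    intro ν hν
    have hm1 : 1 ≤ ν.natAbs := by omega
    set m : ℕ := ν.natAbs with hm_def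
    have hm1' : (1:ℝ) ≤ m := by exact_mod_cast hm1
    have hd := hdist ν hν
    have h0 : 0 ≤ (m:ℝ) - 1 + δ := by linarith
    have h1 : ((m:ℝ) - 1 + δ)^2 ≤ (q + ν - x.1)^2 := by
      calc ((m:ℝ)-1+δ)^2 ≤ |q + ν - x.1|^2 := by nlinarith [abs_nonneg (q + (ν:ℝ) - x.1)]
      _ = (q + ν - x.1)^2 := sq_abs _
    have hml : ((m - 1 : ℕ) : ℝ) = (m:ℝ) - 1 := by
      push_cast [Nat.cast_sub hm1]; ring
    have hsq : (m:ℝ) - 1 ≤ ((m:ℝ)-1)^2 := by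
      rw [← hml]; exact_mod_cast Nat.le_self_pow two_ne_zero (m-1)
    have hX : ((m:ℝ) - 1) + δ^2 ≤ (q + ν - x.1)^2 := by
      nlinarith [mul_nonneg (by linarith : (0:ℝ) ≤ (m:ℝ)-1) hδ.le]
    have e1 : σ * N * Real.pi * (((m:ℝ)-1) + δ^2) ≤ σ * N * Real.pi * (q + ν - x.1)^2 :=
      mul_le_mul_of_nonneg_left hX (by positivity)
    have e2 : (m:ℝ) - 1 ≤ σ * N * Real.pi * ((m:ℝ)-1) :=
      le_mul_of_one_le_left (by linarith) hσNπ
    have e3 : Real.pi * (N:ℝ) * σ * δ^2 = σ * N * Real.pi * δ^2 := by ring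
    have hexp_le : Real.pi * N * σ * δ^2 + ((m:ℝ) - 1)
        ≤ σ * N * Real.pi * (q + ν - x.1)^2 := by
      have : σ * N * Real.pi * (((m:ℝ)-1) + δ^2)
          = σ * N * Real.pi * ((m:ℝ)-1) + σ * N * Real.pi * δ^2 := by ring
      rw [e3]; linarith [e1, e2, this.le, this.ge]
    rw [hnorm]
    have hrm : r ^ m = Real.exp (-(m:ℝ)) := by
      rw [hr_def, ← Real.exp_nat_mul]; ring_nf
    have hR : E * Real.exp 1 * Real.exp (-(m:ℝ))
        = Real.exp (-Real.pi * N * σ * δ ^ 2 + 1 + -(m:ℝ)) := by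
      rw [hE_def, ← Real.exp_add, ← Real.exp_add]
    rw [hrm, show A * E * Real.exp 1 * Real.exp (-(m:ℝ))
        = A * (E * Real.exp 1 * Real.exp (-(m:ℝ))) from by ring, hR]
    apply mul_le_mul_of_nonneg_left _ hA0
    apply Real.exp_le_exp.mpr
    nlinarith [hexp_le]
  -- summability and geometric bound
  have hgeom : HasSum (fun ν : ℤ => r ^ ν.natAbs) ((1-r)⁻¹ + r * (1-r)⁻¹) := by
    apply HasSum.of_nat_of_neg_add_one
    · simpa using hasSum_geometric_of_lt_one hr0 hr1
    · have h := (hasSum_geometric_of_lt_one hr0 hr1).mul_left r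
      have heq : (fun n : ℕ => r ^ ((-((n:ℤ) + 1)).natAbs)) = fun n : ℕ => r * r ^ n := by
        funext n
        have hn : ((-((n:ℤ) + 1)).natAbs) = n + 1 := by omega
        rw [hn, pow_succ]; ring
      exact heq ▸ h
  have hS3 : (1-r)⁻¹ + r * (1-r)⁻¹ ≤ 3 := by
    have h1r : (0:ℝ) < 1 - r := by linarith
    have hinv : (1-r)⁻¹ ≤ 2 := by
      calc (1-r)⁻¹ ≤ ((2:ℝ)⁻¹)⁻¹ := inv_anti₀ (by norm_num) (by linarith)
      _ = 2 := by norm_num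
    nlinarith [inv_nonneg.mpr h1r.le]
  have hone_exp : (1:ℝ) ≤ Real.exp 1 := by
    rw [show (1:ℝ) = Real.exp 0 by simp]
    exact Real.exp_le_exp.mpr (by norm_num)
  have hbound : ∀ ν : ℤ, ‖f ν‖ ≤ A * Real.exp 1 * r ^ ν.natAbs := by
    intro ν
    rcases eq_or_ne ν 0 with rfl | hν
    · rw [hnorm]
      simp only [Int.natAbs_zero, pow_zero, mul_one, Int.cast_zero, add_zero]
      apply mul_le_mul_of_nonneg_left _ hA0
      have h1 : Real.exp (-(σ * N * Real.pi * (q - x.1)^2)) ≤ 1 :=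
        Real.exp_le_one_iff.mpr (neg_nonpos.mpr (by positivity))
      linarith
    · calc ‖f ν‖ ≤ A * E * Real.exp 1 * r ^ ν.natAbs := hkey ν hν
        _ = E * (A * Real.exp 1 * r ^ ν.natAbs) := by ring
        _ ≤ 1 * (A * Real.exp 1 * r ^ ν.natAbs) :=
            mul_le_mul_of_nonneg_right hE1 (by positivity)
        _ = A * Real.exp 1 * r ^ ν.natAbs := one_mul _
  have hfs : Summable f :=
    Summable.of_norm_bounded (hgeom.summable.mul_left (A * Real.exp 1)) hbound
  -- the tail bound function
  set g : ℤ → ℝ := fun ν => if ν = 0 then 0 else A * E * Real.exp 1 * r ^ ν.natAbs with hg_def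
  have hprod0 : ∀ ν : ℤ, (0:ℝ) ≤ A * E * Real.exp 1 * r ^ ν.natAbs := by
    intro ν; positivity
  have hg_le : ∀ ν : ℤ, g ν ≤ A * E * Real.exp 1 * r ^ ν.natAbs := by
    intro ν
    by_cases h : ν = 0
    · simpa [hg_def, h] using hprod0 ν
    · simp [hg_def, h]
  have hg_nonneg : ∀ ν : ℤ, 0 ≤ g ν := by
    intro ν
    by_cases h : ν = 0
    · simp [hg_def, h]
    · simpa [hg_def, h] using hprod0 ν
  have hgs : Summable g := Summable.of_nonneg_of_le hg_nonneg hg_le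
    (hgeom.summable.mul_left (A * E * Real.exp 1))
  have hnormite : ∀ ν : ℤ, ‖if ν = 0 then (0:ℂ) else f ν‖ ≤ g ν := by
    intro ν
    by_cases h : ν = 0
    · simp [h, hg_def]
    · simpa [h, hg_def] using hkey ν h
  have hdiff : cylCS N x σ q - planeCS N x σ q = ∑' ν : ℤ, (if ν = 0 then (0:ℂ) else f ν) := by
    have hsplit := hfs.tsum_eq_add_tsum_ite 0
    have hf0 : f 0 = planeCS N x σ q := by simp [hf_def]
    have hcyl : cylCS N x σ q = ∑' ν : ℤ, f ν := rfl
    rw [hcyl, hsplit, hf0]; ring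
  rw [hdiff]
  have hmain : ‖∑' ν : ℤ, (if ν = 0 then (0:ℂ) else f ν)‖ ≤ ∑' ν : ℤ, g ν :=
    tsum_of_norm_bounded hgs.hasSum hnormite
  have htail : (∑' ν : ℤ, g ν) ≤ A * E * Real.exp 1 * ((1-r)⁻¹ + r * (1-r)⁻¹) := by
    have h2 := hgeom.mul_left (A * E * Real.exp 1)
    refine le_trans (Summable.tsum_le_tsum hg_le hgs h2.summable) ?_
    exact le_of_eq h2.tsum_eq
  set P : ℝ := (σ * N) ^ ((1:ℝ)/4) with hP_def
  have hP0 : 0 ≤ P := Real.rpow_nonneg (by positivity) _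
  have hA_le : A ≤ 2 * P := by
    rw [hA_def, show (2 * (N:ℝ) * σ) = 2 * (σ * N) from by ring,
      Real.mul_rpow (by norm_num) (by positivity), hP_def]
    refine mul_le_mul_of_nonneg_right ?_ hP0
    calc (2:ℝ) ^ ((1:ℝ)/4) ≤ (2:ℝ) ^ (1:ℝ) :=
        Real.rpow_le_rpow_of_exponent_le one_le_two (by norm_num)
    _ = 2 := Real.rpow_one 2
  have he3 : Real.exp 1 ≤ 3 := by linarith [Real.exp_one_lt_d9]
  set S : ℝ := (1-r)⁻¹ + r * (1-r)⁻¹ with hS_def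
  have hS0 : 0 ≤ S :=
    add_nonneg (inv_nonneg.mpr (by linarith)) (mul_nonneg hr0 (inv_nonneg.mpr (by linarith)))
  have s1 : A * E ≤ 2 * P * E := mul_le_mul_of_nonneg_right hA_le hE0.le
  have s2 : A * E * Real.exp 1 ≤ 2 * P * E * 3 :=
    mul_le_mul s1 he3 (Real.exp_pos 1).le (by positivity)
  have s3 : A * E * Real.exp 1 * S ≤ 2 * P * E * 3 * 3 :=
    mul_le_mul s2 hS3 hS0 (by positivity)
  calc ‖∑' ν : ℤ, (if ν = 0 then (0:ℂ) else f ν)‖ ≤ ∑' ν : ℤ, g ν := hmain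
  _ ≤ A * E * Real.exp 1 * S := htail
  _ ≤ 2 * P * E * 3 * 3 := s3
  _ ≤ 20 * P * E := by nlinarith [mul_nonneg hP0 hE0.le]

end
end

section
/- (Fourier covariance of torus coherent states.) For every even integer N ≥ 2, every σ > 0, and every x = (q₀,p₀) ∈ ℝ², the discrete Fourier transform maps the torus coherent state at x with squeezing σ exactly to the torus coherent state at the rotated point F x = (p₀, −q₀) with squeezing 1/σ: F_N ψ_{x,σ} = ψ_{Fx, 1/σ}. -/
open scoped Real InnerProductSpace
open MeasureTheory

noncomputable section

/-- Auxiliary: reindexing equivalence `Fin N × ℤ ≃ ℤ`. -/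
def finIntEquivAux (N : ℕ) (hN : 0 < N) : Fin N × ℤ ≃ ℤ where
  toFun p := (p.1 : ℤ) + N * p.2
  invFun m := (⟨(m % N).toNat, by
      have h1 : 0 ≤ m % (N:ℤ) := Int.emod_nonneg m (by exact_mod_cast hN.ne')
      have h2 : m % (N:ℤ) < N := Int.emod_lt_of_pos m (by exact_mod_cast hN)
      omega⟩, m / N)
  left_inv := by
    rintro ⟨j, ν⟩
    have hj : (j : ℤ) < N := by exact_mod_cast j.2
    have hNz : (N : ℤ) ≠ 0 := by exact_mod_cast hN.ne'
    have h1 : ((j : ℤ) + N * ν) % N = j := by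
      rw [Int.add_mul_emod_self_left, Int.emod_eq_of_lt (by positivity) hj]
    have h2 : ((j : ℤ) + N * ν) / N = ν := by
      rw [Int.add_mul_ediv_left _ _ hNz, Int.ediv_eq_zero_of_lt (by positivity) hj, zero_add]
    ext
    · simp [h1]
    · simp [h2]
  right_inv m := by
    simp only
    rw [Int.toNat_of_nonneg (Int.emod_nonneg m (by exact_mod_cast hN.ne'))]
    exact Int.emod_add_mul_ediv m N

/-- Auxiliary: the cylinder coherent state as a Jacobi theta function. -/
lemma cylCS_theta_aux (N : ℕ) (x : ℝ × ℝ) (σ : ℝ) (q : ℝ) :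
    cylCS N x σ q = (((2 * N * σ : ℝ) ^ ((1 : ℝ) / 4) : ℝ) : ℂ) *
      Complex.exp (-Complex.I * (Real.pi : ℂ) * N * (x.1 : ℂ) * (x.2 : ℂ) +
        2 * (Real.pi : ℂ) * Complex.I * N * (x.2 : ℂ) * (q : ℂ) -
        (σ : ℂ) * N * (Real.pi : ℂ) * ((q : ℂ) - (x.1 : ℂ)) ^ 2) *
      jacobiTheta₂ ((N : ℂ) * (x.2 : ℂ) + Complex.I * σ * N * ((q : ℂ) - (x.1 : ℂ)))
        (Complex.I * σ * N) := by
  unfold cylCS jacobiTheta₂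
  rw [mul_assoc, ← tsum_mul_left, ← tsum_mul_left]
  refine tsum_congr fun ν => ?_
  unfold planeCS jacobiTheta₂_term
  rw [mul_assoc, ← Complex.exp_add]
  congr 2
  push_cast
  linear_combination (-(Real.pi*σ*(N:ℂ)*((ν:ℂ)^2 + 2*ν*((q:ℂ) - (x.1:ℂ))))) * Complex.I_sq

/-- Auxiliary: the Fourier-twisted plane coherent state term as a theta term. -/
lemma term_lemma_aux (N : ℕ) (hN : 0 < N) (σ : ℝ) (q₀ p₀ : ℝ) (k : ℕ) (m : ℤ) :
    Complex.exp (-2 * (Real.pi : ℂ) * Complex.I * k * m / N) *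
        planeCS N (q₀, p₀) σ ((m : ℝ) / N)
      = ((((2 * N * σ : ℝ) ^ ((1 : ℝ) / 4) : ℝ) : ℂ) *
          Complex.exp (-Complex.I * (Real.pi : ℂ) * N * q₀ * p₀ -
            σ * Real.pi * N * (q₀:ℂ) ^ 2)) *
        jacobiTheta₂_term m ((p₀ : ℂ) - k / N - Complex.I * σ * q₀)
          (Complex.I * σ * (N : ℂ)⁻¹) := by
  have hNC : (N : ℂ) ≠ 0 := by exact_mod_cast hN.ne'
  unfold planeCS jacobiTheta₂_term
  rw [mul_comm (Complex.exp _)]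
  simp only [mul_assoc, ← Complex.exp_add]
  congr 2
  push_cast
  field_simp
  linear_combination (σ*(2*N*q₀*(m:ℂ) - (m:ℂ)^2)) * Complex.I_sq


/-- Auxiliary: the real prefactor identity. -/
lemma const_aux (N : ℕ) (hN : 0 < N) (σ : ℝ) (hσ : 0 < σ) :
    (N:ℝ)⁻¹ * (2*N*σ) ^ ((1:ℝ)/4) * (Real.sqrt (σ/N))⁻¹
      = (Real.sqrt N)⁻¹ * (2*N*σ⁻¹) ^ ((1:ℝ)/4) := by
  have hN' : (0:ℝ) < N := by exact_mod_cast hN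
  have e1 : (2*(N:ℝ)*σ) = (2*N*σ⁻¹) * σ^2 := by field_simp
  rw [Real.sqrt_eq_rpow, Real.sqrt_eq_rpow, e1,
    Real.mul_rpow (by positivity) (by positivity)]
  have e2 : ((σ:ℝ)^2) ^ ((1:ℝ)/4) = σ ^ ((1:ℝ)/2) := by
    rw [← Real.rpow_natCast σ 2, ← Real.rpow_mul hσ.le]
    norm_num
  rw [e2, Real.div_rpow hσ.le hN'.le]
  set A := (2*(N:ℝ)*σ⁻¹) ^ ((1:ℝ)/4) with hA
  set s := σ ^ ((1:ℝ)/2) with hsd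
  set n := (N:ℝ) ^ ((1:ℝ)/2) with hnd
  have hs : s * s = σ := by rw [hsd, ← Real.rpow_add hσ]; norm_num
  have hn : n * n = N := by rw [hnd, ← Real.rpow_add hN']; norm_num
  have hs0 : s ≠ 0 := by rw [hsd]; positivity
  have hn0 : n ≠ 0 := by rw [hnd]; positivity
  rw [inv_div]
  field_simp
  linear_combination A * hn

set_option maxHeartbeats 1000000 in
/-- Fourier covariance of torus coherent states: F_N ψ_{x,σ} = ψ_{Fx, 1/σ}
with F x = (p₀, −q₀). -/
theorem fourier_covariance (N : ℕ) (hN : 2 ≤ N) (hNe : Even N) (σ : ℝ) (hσ : 0 < σ)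
    (x : ℝ × ℝ) :
    Matrix.toEuclideanCLM (𝕜 := ℂ) (DFT N) (torusCS N x σ)
      = torusCS N (x.2, -x.1) σ⁻¹ := by
  obtain ⟨q₀, p₀⟩ := x
  have hN0 : 0 < N := by omega
  have hNR : (0:ℝ) < N := by exact_mod_cast hN0
  have hNC : (N : ℂ) ≠ 0 := by exact_mod_cast hN0.ne'
  have hσC : (σ : ℂ) ≠ 0 := by exact_mod_cast hσ.ne'
  unfold torusCS
  rw [WithLp.equiv_symm_apply, Matrix.toEuclideanCLM_toLp]
  apply congrArg
  funext k
  simp only [Matrix.toLin'_apply, Matrix.mulVec, dotProduct, DFT, Matrix.of_apply]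
  -- the theta parameters
  set z : ℂ := (p₀ : ℂ) - k / N - Complex.I * σ * q₀ with hz_def
  set τ : ℂ := Complex.I * σ * (N : ℂ)⁻¹ with hτ_def
  have hτ_im : 0 < τ.im := by
    have : τ = Complex.ofReal (σ / N) * Complex.I := by
      rw [hτ_def]; push_cast; ring
    rw [this]
    simpa using div_pos hσ hNR
  -- the summand over ℤ
  set G : ℤ → ℂ := fun m => (N : ℂ)⁻¹ *
    (Complex.exp (-2 * (Real.pi : ℂ) * Complex.I * k * m / N) *
      planeCS N (q₀, p₀) σ ((m : ℝ) / N)) with hG_def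
  have hGterm : ∀ m : ℤ, G m = ((N : ℂ)⁻¹ *
      ((((2 * N * σ : ℝ) ^ ((1 : ℝ) / 4) : ℝ) : ℂ) *
        Complex.exp (-Complex.I * (Real.pi : ℂ) * N * q₀ * p₀ -
          σ * Real.pi * N * (q₀:ℂ) ^ 2))) * jacobiTheta₂_term m z τ := by
    intro m
    rw [hG_def]
    simp only
    rw [term_lemma_aux N hN0 σ q₀ p₀ k m, hz_def, hτ_def]
    ring
  have hGsum : Summable G := by
    rw [funext hGterm]
    exact ((summable_jacobiTheta₂_term_iff z τ).mpr hτ_im).mul_left _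
  -- step 1: the finite sum of tsums equals the full tsum
  have hstep : (∑ j : Fin N, ((Real.sqrt N : ℝ) : ℂ)⁻¹ *
        Complex.exp (-2 * (Real.pi : ℂ) * Complex.I * (k : ℕ) * (j : ℕ) / N) *
        (((Real.sqrt N : ℝ) : ℂ)⁻¹ * cylCS N (q₀, p₀) σ ((j : ℕ) / N)))
      = ∑' m : ℤ, G m := by
    have hGe : ∀ p : Fin N × ℤ, G (finIntEquivAux N hN0 p) =
        ((Real.sqrt N : ℝ) : ℂ)⁻¹ *
          Complex.exp (-2 * (Real.pi : ℂ) * Complex.I * (k : ℕ) * (p.1 : ℕ) / N) *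
          (((Real.sqrt N : ℝ) : ℂ)⁻¹ * planeCS N (q₀, p₀) σ (((p.1 : ℕ) : ℝ) / N + (p.2 : ℝ))) := by
      rintro ⟨j, ν⟩
      rw [hG_def]
      simp only [finIntEquivAux, Equiv.coe_fn_mk]
      have harg : ((((j : ℤ) + N * ν : ℤ) : ℝ)) / N = ((j : ℕ) : ℝ) / N + (ν : ℝ) := by
        push_cast
        field_simp
      have hexp : Complex.exp (-2 * (Real.pi : ℂ) * Complex.I * k *
            (((j : ℤ) + N * ν : ℤ) : ℂ) / N)
          = Complex.exp (-2 * (Real.pi : ℂ) * Complex.I * (k : ℕ) * (j : ℕ) / N) := by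
        have : (-2 * (Real.pi : ℂ) * Complex.I * k * (((j : ℤ) + N * ν : ℤ) : ℂ) / N)
            = (-2 * (Real.pi : ℂ) * Complex.I * (k : ℕ) * (j : ℕ) / N) +
              ((-(k * ν) : ℤ) : ℂ) * (2 * Real.pi * Complex.I) := by
          push_cast
          field_simp
          ring
        rw [this, Complex.exp_add, Complex.exp_int_mul_two_pi_mul_I, mul_one]
      rw [harg, hexp]
      have hrt : ((Real.sqrt N : ℝ) : ℂ)⁻¹ * ((Real.sqrt N : ℝ) : ℂ)⁻¹ = (N : ℂ)⁻¹ := by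
        rw [← mul_inv, ← Complex.ofReal_mul, Real.mul_self_sqrt hNR.le,
          Complex.ofReal_natCast]
      rw [← hrt]
      push_cast
      ring
    have hsum' : Summable (fun p : Fin N × ℤ => G (finIntEquivAux N hN0 p)) :=
      (Equiv.summable_iff (finIntEquivAux N hN0)).mpr hGsum
    calc (∑ j : Fin N, ((Real.sqrt N : ℝ) : ℂ)⁻¹ *
            Complex.exp (-2 * (Real.pi : ℂ) * Complex.I * (k : ℕ) * (j : ℕ) / N) *
            (((Real.sqrt N : ℝ) : ℂ)⁻¹ * cylCS N (q₀, p₀) σ ((j : ℕ) / N)))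
        = ∑ j : Fin N, ∑' ν : ℤ, G (finIntEquivAux N hN0 (j, ν)) := by
          refine Finset.sum_congr rfl fun j _ => ?_
          unfold cylCS
          rw [← tsum_mul_left, ← tsum_mul_left]
          exact tsum_congr fun ν => by rw [hGe (j, ν)]
      _ = ∑' j : Fin N, ∑' ν : ℤ, G (finIntEquivAux N hN0 (j, ν)) := (tsum_fintype _).symm
      _ = ∑' p : Fin N × ℤ, G (finIntEquivAux N hN0 p) :=
          (Summable.tsum_prod' hsum' fun j => hsum'.prod_factor j).symm
      _ = ∑' m : ℤ, G m := (finIntEquivAux N hN0).tsum_eq G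
  rw [hstep]
  -- step 2: evaluate the tsum as a theta function
  have htheta : (∑' m : ℤ, G m) = ((N : ℂ)⁻¹ *
      ((((2 * N * σ : ℝ) ^ ((1 : ℝ) / 4) : ℝ) : ℂ) *
        Complex.exp (-Complex.I * (Real.pi : ℂ) * N * q₀ * p₀ -
          σ * Real.pi * N * (q₀:ℂ) ^ 2))) * jacobiTheta₂ z τ := by
    rw [funext hGterm, tsum_mul_left]
    rfl
  rw [htheta, jacobiTheta₂_functional_equation z τ]
  -- step 3: identify parameters
  have hzt : z / τ = (N : ℂ) * ((-q₀ : ℝ) : ℂ) +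
      Complex.I * (σ⁻¹ : ℝ) * N * ((((k : ℕ) : ℝ) / N : ℝ) - ((p₀ : ℝ) : ℂ)) := by
    rw [hz_def, hτ_def, div_eq_iff (by
      simp [Complex.I_ne_zero, hσC, hNC, mul_eq_zero])]
    push_cast
    field_simp
    linear_combination ((p₀:ℂ)*N - (k:ℂ)) * Complex.I_sq
  have hmt : -1 / τ = Complex.I * ((σ⁻¹ : ℝ) : ℂ) * N := by
    rw [hτ_def]
    have hI : Complex.I * ↑σ * (↑N)⁻¹ ≠ 0 := by
      simp [Complex.I_ne_zero, hσC, hNC, mul_eq_zero]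
    field_simp
    have hst : (σ:ℂ) * ((1/σ:ℝ):ℂ) = 1 := by
      rw [← Complex.ofReal_mul, mul_one_div_cancel hσ.ne', Complex.ofReal_one]
    linear_combination (-(σ:ℂ)*((1/σ:ℝ):ℂ)) * Complex.I_sq + hst
  have hroot : (-Complex.I * τ) ^ ((1:ℂ)/2) = ((Real.sqrt (σ/N) : ℝ) : ℂ) := by
    have h1 : -Complex.I * τ = (((σ/N : ℝ)) : ℂ) := by
      rw [hτ_def]; push_cast
      field_simp
      linear_combination (-1:ℂ) * Complex.I_sq
    rw [h1, show ((1:ℂ)/2) = (((1:ℝ)/2 : ℝ) : ℂ) by norm_num,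
      ← Complex.ofReal_cpow (by positivity), Real.sqrt_eq_rpow]
  show _ = ((Real.sqrt N : ℝ) : ℂ)⁻¹ * cylCS N (p₀, -q₀) σ⁻¹ (((k:ℕ):ℝ)/N)
  rw [cylCS_theta_aux N (p₀, -q₀) σ⁻¹ (((k:ℕ):ℝ)/N)]
  simp only
  rw [← hzt, ← hmt, hroot]
  have hexp2 : (-Complex.I * (Real.pi : ℂ) * N * q₀ * p₀ - σ * Real.pi * N * (q₀:ℂ)^2)
        + (-(Real.pi:ℂ) * Complex.I * z^2 / τ)
      = -Complex.I * (Real.pi : ℂ) * N * ((p₀:ℝ):ℂ) * ((-q₀:ℝ):ℂ) +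
        2 * (Real.pi : ℂ) * Complex.I * N * ((-q₀:ℝ):ℂ) * ((((k:ℕ):ℝ)/N : ℝ):ℂ) -
        ((σ⁻¹:ℝ):ℂ) * N * (Real.pi:ℂ) * (((((k:ℕ):ℝ)/N : ℝ):ℂ) - ((p₀:ℝ):ℂ))^2 := by
    rw [hz_def, hτ_def]
    push_cast
    field_simp
    linear_combination (-(N:ℂ)^2 * (q₀:ℂ)^2 * (σ:ℂ)^2) * Complex.I_sq
  have hconst : ((N:ℂ)⁻¹ * (((2*N*σ:ℝ) ^ ((1:ℝ)/4) : ℝ) : ℂ)) *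
        (((Real.sqrt (σ/N) : ℝ) : ℂ))⁻¹
      = ((Real.sqrt N : ℝ) : ℂ)⁻¹ * (((2*N*σ⁻¹:ℝ) ^ ((1:ℝ)/4) : ℝ) : ℂ) := by
    have h : (((N:ℝ)⁻¹ * (2*N*σ) ^ ((1:ℝ)/4) * (Real.sqrt (σ/N))⁻¹ : ℝ) : ℂ)
        = (((Real.sqrt N)⁻¹ * (2*N*σ⁻¹) ^ ((1:ℝ)/4) : ℝ) : ℂ) := by
      exact_mod_cast congrArg Complex.ofReal (const_aux N hN0 σ hσ)
    push_cast at h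
    linear_combination h
  calc ((N:ℂ)⁻¹ * ((((2*N*σ:ℝ) ^ ((1:ℝ)/4) : ℝ) : ℂ) *
          Complex.exp (-Complex.I * (Real.pi : ℂ) * N * q₀ * p₀ -
            σ * Real.pi * N * (q₀:ℂ)^2))) *
        (1 / (((Real.sqrt (σ/N) : ℝ) : ℂ)) *
          Complex.exp (-(Real.pi:ℂ) * Complex.I * z^2 / τ) * jacobiTheta₂ (z/τ) (-1/τ))
      = (((N:ℂ)⁻¹ * (((2*N*σ:ℝ) ^ ((1:ℝ)/4) : ℝ) : ℂ)) *
          (((Real.sqrt (σ/N) : ℝ) : ℂ))⁻¹) *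
        (Complex.exp ((-Complex.I * (Real.pi : ℂ) * N * q₀ * p₀ -
            σ * Real.pi * N * (q₀:ℂ)^2) + (-(Real.pi:ℂ) * Complex.I * z^2 / τ)) *
          jacobiTheta₂ (z/τ) (-1/τ)) := by
        rw [Complex.exp_add]; ring
    _ = ((Real.sqrt N : ℝ) : ℂ)⁻¹ * ((((2*N*σ⁻¹:ℝ) ^ ((1:ℝ)/4) : ℝ) : ℂ) *
          Complex.exp (-Complex.I * (Real.pi : ℂ) * N * ((p₀:ℝ):ℂ) * ((-q₀:ℝ):ℂ) +
            2 * (Real.pi : ℂ) * Complex.I * N * ((-q₀:ℝ):ℂ) * ((((k:ℕ):ℝ)/N : ℝ):ℂ) -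
            ((σ⁻¹:ℝ):ℂ) * N * (Real.pi:ℂ) * (((((k:ℕ):ℝ)/N : ℝ):ℂ) - ((p₀:ℝ):ℂ))^2) *
          jacobiTheta₂ (z/τ) (-1/τ)) := by
        rw [hconst, hexp2]; ring

end
end

section
/- (Propagation of the good sets under the baker's map.) For every integer n ≥ 1, every δ ∈ (0, 2^{−n−1}), every γ ∈ (0,1/2), and every integer j with 0 ≤ j ≤ n−1, the j-th iterate of the baker's map satisfies the inclusion B^j( D_{n,δ,γ} ) ⊆ D_{n−j, 2^j δ, γ/2^j}. -/
open scoped Real InnerProductSpace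
open MeasureTheory

noncomputable section

lemma bakerMap_stepD (m : ℕ) (hm : 1 ≤ m) (δ γ : ℝ) (x : ℝ × ℝ)
    (hx : x.1 ∈ Set.Ico (0:ℝ) 1 ∧ x.2 ∈ Set.Ico (0:ℝ) 1 ∧ inD m δ γ x) :
    (bakerMap x).1 ∈ Set.Ico (0:ℝ) 1 ∧ (bakerMap x).2 ∈ Set.Ico (0:ℝ) 1 ∧
      inD (m - 1) (2 * δ) (γ / 2) (bakerMap x) := by
  obtain ⟨⟨hq0, hq1⟩, ⟨hp0, hp1⟩, hk, hpγ0, hpγ1⟩ := hx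
  have ha : (0:ℝ) < 2 ^ (m - 1) := by positivity
  have hpow : (2:ℝ) ^ m = 2 * 2 ^ (m - 1) := by
    rw [← pow_succ']
    congr 1
    omega
  unfold bakerMap
  by_cases h : x.1 < 1 / 2
  · simp only [if_pos h]
    refine ⟨⟨by linarith, by linarith⟩, ⟨by linarith, by linarith⟩, ?_, by constructor <;> · simp only []; linarith⟩
    intro k
    have hk' := hk k
    have h2 : (2:ℝ) * x.1 - (k : ℝ) / 2 ^ (m - 1) = 2 * (x.1 - (k : ℝ) / 2 ^ m) := by
      rw [hpow]; field_simp
    simp only []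
    rw [h2, abs_mul, abs_of_nonneg (by norm_num : (0:ℝ) ≤ 2)]
    linarith
  · simp only [if_neg h]
    push_neg at h
    refine ⟨⟨by linarith, by linarith⟩, ⟨by linarith, by linarith⟩, ?_, by constructor <;> · simp only []; linarith⟩
    intro k
    have hk' := hk (k + 2 ^ (m - 1))
    have hcast : ((k + 2 ^ (m - 1) : ℤ) : ℝ) = (k : ℝ) + 2 ^ (m - 1) := by push_cast; ring
    rw [hcast] at hk'
    have h2 : (2:ℝ) * x.1 - 1 - (k : ℝ) / 2 ^ (m - 1) =
        2 * (x.1 - ((k : ℝ) + 2 ^ (m - 1)) / 2 ^ m) := by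
      rw [hpow]; field_simp; ring
    simp only []
    rw [h2, abs_mul, abs_of_nonneg (by norm_num : (0:ℝ) ≤ 2)]
    linarith

/-- Propagation of the good sets under the baker's map:
B^j(D_{n,δ,γ}) ⊆ D_{n−j, 2^j δ, γ/2^j} for 0 ≤ j ≤ n−1. -/
theorem goodset_propagation (n : ℕ) (hn : 1 ≤ n) (δ γ : ℝ)
    (hδ : 0 < δ) (hδ' : δ < 1 / 2 ^ (n + 1)) (hγ : 0 < γ) (hγ' : γ < 1 / 2)
    (j : ℕ) (hj : j ≤ n - 1) :
    bakerMap^[j] '' {x : ℝ × ℝ | x.1 ∈ Set.Ico (0:ℝ) 1 ∧ x.2 ∈ Set.Ico (0:ℝ) 1 ∧ inD n δ γ x}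
      ⊆ {x : ℝ × ℝ | x.1 ∈ Set.Ico (0:ℝ) 1 ∧ x.2 ∈ Set.Ico (0:ℝ) 1 ∧
          inD (n - j) (2 ^ j * δ) (γ / 2 ^ j) x} := by
  rintro _ ⟨x, hx, rfl⟩
  simp only [Set.mem_setOf_eq] at hx ⊢
  induction j with
  | zero => simpa using hx
  | succ j ih =>
    have hj' : j ≤ n - 1 := le_trans (Nat.le_succ j) hj
    have key := bakerMap_stepD (n - j) (by omega) (2 ^ j * δ) (γ / 2 ^ j)
      (bakerMap^[j] x) (ih hj')
    rw [Function.iterate_succ_apply']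
    have e1 : (2:ℝ) * (2 ^ j * δ) = 2 ^ (j + 1) * δ := by ring
    have e2 : γ / 2 ^ j / 2 = γ / 2 ^ (j + 1) := by
      rw [div_div, ← pow_succ]
    have e3 : n - j - 1 = n - (j + 1) := by omega
    rw [e1, e2, e3] at key
    exact key

end
end
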